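/- arXiv:1410.0795 — 3 statements merged into one kernel-verified Lean document; each statement's English description precedes it below -/
import Mathlib

section
/- Let M = ⊕_{i=1}^r I_i e_i ⊊ F be a squarefree stable submodule. Then β_{k,k+ℓ}(M) is an extremal Betti number if and only if k + ℓ = max{m(u) + f_i : u e_i ∈ G(M)_ℓ, i = 1,...,r} and m(u) + f_i < k + j for all j > ℓ and all u e_i ∈ G(M)_j. -/
open scoped Classical

noncomputable section

/-- The squarefree monomial `∏_{i ∈ A} x_i` of `S = K[x_1,…,x_n]`,
encoded by its support `A ⊆ {1,…,n}`. -/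
def sqMon (K : Type*) [Field K] {n : ℕ} (A : Finset (Fin n)) : MvPolynomial (Fin n) K :=
  ∏ i ∈ A, MvPolynomial.X i

/-- `[x_1,…,x_n]^d`: the ideal generated by all squarefree monomials of degree `d`. -/
def sqPow (K : Type*) [Field K] (n d : ℕ) : Ideal (MvPolynomial (Fin n) K) :=
  Ideal.span {p | ∃ A : Finset (Fin n), A.card = d ∧ p = sqMon K A}

/-- `I` is a squarefree monomial ideal: generated by squarefree monomials. -/
def IsSqMonIdeal (K : Type*) [Field K] {n : ℕ} (I : Ideal (MvPolynomial (Fin n) K)) : Prop :=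
  ∃ G : Set (Finset (Fin n)), I = Ideal.span (sqMon K '' G)

/-- `A` encodes a minimal monomial generator of the squarefree monomial ideal `I`. -/
def IsMinGen (K : Type*) [Field K] {n : ℕ} (I : Ideal (MvPolynomial (Fin n) K))
    (A : Finset (Fin n)) : Prop :=
  sqMon K A ∈ I ∧ ∀ B : Finset (Fin n), B ⊂ A → sqMon K B ∉ I

/-- `m(u)` : the largest index (1-based) occurring in the squarefree monomial with support `A`. -/
def mIdx {n : ℕ} (A : Finset (Fin n)) : ℕ := A.sup (fun i => i.1 + 1)

/-- Squarefree stable ideal: for every minimal generator `u`,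
`x_j u / x_{m(u)} ∈ I` for all `j < m(u)`, `j ∉ supp u`. -/
def IsSqStableIdeal (K : Type*) [Field K] {n : ℕ} (I : Ideal (MvPolynomial (Fin n) K)) : Prop :=
  IsSqMonIdeal K I ∧ ∀ A : Finset (Fin n), IsMinGen K I A →
    ∀ (hA : A.Nonempty) (j : Fin n), j ∉ A → j < A.max' hA →
      sqMon K (insert j (A.erase (A.max' hA))) ∈ I

/-- Squarefree strongly stable ideal: for every minimal generator `u`,
`x_j u / x_i ∈ I` for all `i ∈ supp u` and `j < i`, `j ∉ supp u`. -/
def IsSqStronglyStableIdeal (K : Type*) [Field K] {n : ℕ}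
    (I : Ideal (MvPolynomial (Fin n) K)) : Prop :=
  IsSqMonIdeal K I ∧ ∀ A : Finset (Fin n), IsMinGen K I A →
    ∀ i ∈ A, ∀ j : Fin n, j ∉ A → j < i → sqMon K (insert j (A.erase i)) ∈ I

/-- The squarefree lexicographic order (on supports of equal-degree squarefree monomials):
`A >_slex B` iff at the first index where they differ, `A` has the smaller index. -/
def slexGT {n : ℕ} (A B : Finset (Fin n)) : Prop :=
  ∃ h : (symmDiff A B).Nonempty, (symmDiff A B).min' h ∈ A

/-- Squarefree lexsegment ideal. -/
def IsSqLexIdeal (K : Type*) [Field K] {n : ℕ} (I : Ideal (MvPolynomial (Fin n) K)) : Prop :=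
  IsSqMonIdeal K I ∧ ∀ A B : Finset (Fin n), A.card = B.card →
    sqMon K A ∈ I → slexGT B A → sqMon K B ∈ I

/-- `indeg I`: the least degree of a (squarefree) monomial in `I`. -/
def indeg (K : Type*) [Field K] {n : ℕ} (I : Ideal (MvPolynomial (Fin n) K)) : ℕ :=
  sInf {d : ℕ | ∃ A : Finset (Fin n), A.card = d ∧ sqMon K A ∈ I}

/-- `G(I)_d`: the minimal generators of `I` in degree `d`, as a finset of supports. -/
def mgens (K : Type*) [Field K] {n : ℕ} (I : Ideal (MvPolynomial (Fin n) K)) (d : ℕ) :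
    Finset (Finset (Fin n)) :=
  Finset.univ.filter (fun A => IsMinGen K I A ∧ A.card = d)

/-- Graded Betti numbers `β_{k,k+j}(M)` of `M = ⊕ I_i e_i` (deg `e_i = f i`),
via the Aramova–Herzog–Hibi formula. -/
def betti (K : Type*) [Field K] {n r : ℕ} (I : Fin r → Ideal (MvPolynomial (Fin n) K))
    (f : Fin r → ℕ) (k j : ℕ) : ℕ :=
  ∑ i : Fin r, ∑ A ∈ mgens K (I i) (j - f i), Nat.choose (mIdx A - A.card) k

/-- Graded Betti numbers `β_{k,k+j}(I)` of a squarefree stable ideal (AHH formula). -/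
def bettiI (K : Type*) [Field K] {n : ℕ} (I : Ideal (MvPolynomial (Fin n) K)) (k j : ℕ) : ℕ :=
  ∑ A ∈ mgens K I j, Nat.choose (mIdx A - A.card) k

/-- `β k ℓ` (standing for `β_{k,k+ℓ}`) is an extremal Betti number. -/
def IsExtremal (β : ℕ → ℕ → ℕ) (k ℓ : ℕ) : Prop :=
  β k ℓ ≠ 0 ∧ ∀ i j : ℕ, k ≤ i → ℓ ≤ j → (i, j) ≠ (k, ℓ) → β i j = 0

/-- Squarefree stable submodule `M = ⊕ I_i e_i ⊊ F` (characterization):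
each `I_i` a proper squarefree stable ideal, and
`[x_1,…,x_n]^{f_{i+1}-f_i} I_{i+1} ⊆ I_i`. -/
def IsSqStableSubmodule (K : Type*) [Field K] {n r : ℕ}
    (I : Fin r → Ideal (MvPolynomial (Fin n) K)) (f : Fin r → ℕ) : Prop :=
  (∀ i, I i ≠ ⊤ ∧ IsSqStableIdeal K (I i)) ∧
  ∀ i : Fin r, ∀ h : i.1 + 1 < r,
    sqPow K n (f ⟨i.1 + 1, h⟩ - f i) * I ⟨i.1 + 1, h⟩ ≤ I i

/-- Squarefree lexicographic submodule (characterization of Proposition `lex`):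
each `I_i` a proper squarefree lexsegment ideal, and
`[x_1,…,x_n]^{indeg I_{i+1} + f_{i+1} - f_i} ⊆ I_i`. -/
def IsSqLexSubmodule (K : Type*) [Field K] {n r : ℕ}
    (I : Fin r → Ideal (MvPolynomial (Fin n) K)) (f : Fin r → ℕ) : Prop :=
  (∀ i, IsSqLexIdeal K (I i) ∧ I i ≠ ⊤) ∧
  ∀ i : Fin r, ∀ h : i.1 + 1 < r,
    sqPow K n (indeg K (I ⟨i.1 + 1, h⟩) + f ⟨i.1 + 1, h⟩ - f i) ≤ I i

end

/- By the Aramova–Herzog–Hibi formula a generator `u e_i` of degree `j` contributes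
`C(m(u) - (j - f_i), k)` to `β_{k,k+j}`, which is nonzero exactly when `k + j ≤ m(u) + f_i`.
So `β_{k,k+j}(M) ≠ 0` iff some generator of degree `j` has `m(u) + f_i ≥ k + j`, and extremality
of `β_{k,k+ℓ}` becomes a statement about the finitely many values `m(u) + f_i`. -/

lemma card_le_mIdx {n : ℕ} (A : Finset (Fin n)) : A.card ≤ mIdx A := by
  calc A.card = (A.image Fin.val).card := (Finset.card_image_of_injective A Fin.val_injective).symm
    _ ≤ (Finset.range (mIdx A)).card := by
      refine Finset.card_le_card fun x hx => ?_
      obtain ⟨a, ha, rfl⟩ := Finset.mem_image.mp hx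
      exact Finset.mem_range.mpr
        (Nat.lt_of_succ_le (Finset.le_sup (f := fun i : Fin n => i.1 + 1) ha))
    _ = mIdx A := Finset.card_range _

lemma IsMinGen.card_pos {K : Type*} [Field K] {n : ℕ} {I : Ideal (MvPolynomial (Fin n) K)}
    {A : Finset (Fin n)} (hA : IsMinGen K I A) (hI : I ≠ ⊤) : 0 < A.card := by
  refine Finset.card_pos.mpr (Finset.nonempty_iff_ne_empty.mpr ?_)
  rintro rfl
  exact hI ((Ideal.eq_top_iff_one I).mpr (by simpa [sqMon] using hA.1))

lemma choose_mIdx_sub_card_ne_zero_iff {n : ℕ} (A : Finset (Fin n)) (k : ℕ) :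
    (mIdx A - A.card).choose k ≠ 0 ↔ k + A.card ≤ mIdx A := by
  have := card_le_mIdx A
  rw [Nat.choose_ne_zero_iff]
  omega

lemma betti_ne_zero_iff (K : Type*) [Field K] {n r : ℕ}
    (I : Fin r → Ideal (MvPolynomial (Fin n) K)) (f : Fin r → ℕ) (hI : ∀ i, I i ≠ ⊤) (k j : ℕ) :
    betti K I f k j ≠ 0 ↔ ∃ (i : Fin r) (A : Finset (Fin n)),
      IsMinGen K (I i) A ∧ A.card + f i = j ∧ k + j ≤ mIdx A + f i := by
  rw [betti, Ne, Finset.sum_eq_zero_iff]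
  simp only [Finset.sum_eq_zero_iff, Finset.mem_univ, true_implies, mgens, Finset.mem_filter,
    not_forall, ← ne_eq, choose_mIdx_sub_card_ne_zero_iff, exists_prop, true_and, and_assoc]
  refine exists_congr fun i => exists_congr fun A => and_congr_right fun hA => ?_
  -- properness rules out the generator `1` (`A = ∅`): as `j - f i` truncates to `0`, it would
  -- contribute to `β_{0,j}` for every `j ≤ f i`
  have := hA.card_pos (hI i)
  omega

/-- `P j v` reads: some generator of degree `j` has weight `v`. -/
theorem isExtremal_iff_of_ne_zero_iff {β : ℕ → ℕ → ℕ} {P : ℕ → ℕ → Prop}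
    (hβ : ∀ k j, β k j ≠ 0 ↔ ∃ v, P j v ∧ k + j ≤ v) (k ℓ : ℕ) :
    IsExtremal β k ℓ ↔
      IsGreatest {v | P ℓ v} (k + ℓ) ∧ ∀ j, ℓ < j → ∀ v, P j v → v < k + j := by
  have hweight : ∀ {j v}, P j v → j ≤ v → β (v - j) j ≠ 0 := fun {j v} hP hjv =>
    (hβ _ _).mpr ⟨v, hP, by omega⟩
  constructor
  · rintro ⟨hkℓ, hvanish⟩
    have hle : ∀ v, P ℓ v → v ≤ k + ℓ := fun v hP => by
      by_contra! hlt
      exact hweight hP (by omega) (hvanish _ ℓ (by omega) le_rfl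
        (by simp only [ne_eq, Prod.mk.injEq]; omega))
    obtain ⟨v, hP, hkv⟩ := (hβ k ℓ).mp hkℓ
    refine ⟨⟨le_antisymm (hle v hP) hkv ▸ hP, hle⟩, fun j hj v hP => ?_⟩
    by_contra! hge
    exact hweight hP (by omega) (hvanish _ j (by omega) hj.le
        (by simp only [ne_eq, Prod.mk.injEq]; omega))
  · rintro ⟨⟨hmax, hle⟩, hlt⟩
    refine ⟨(hβ k ℓ).mpr ⟨_, hmax, le_rfl⟩, fun i j hki hℓj hne => ?_⟩
    by_contra hij
    obtain ⟨v, hP, hv⟩ := (hβ i j).mp hij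
    rcases hℓj.lt_or_eq with hℓj | rfl
    · exact absurd (hlt j hℓj v hP) (by omega)
    · have := hle hP
      exact hne (Prod.ext (by omega) rfl)

theorem stmt_8_general (K : Type*) [Field K] (n r : ℕ)
    (I : Fin r → Ideal (MvPolynomial (Fin n) K)) (f : Fin r → ℕ)
    (hM : IsSqStableSubmodule K I f) (k ℓ : ℕ) :
    IsExtremal (betti K I f) k ℓ ↔
      (IsGreatest {v : ℕ | ∃ (i : Fin r) (A : Finset (Fin n)),
          IsMinGen K (I i) A ∧ A.card + f i = ℓ ∧ v = mIdx A + f i} (k + ℓ) ∧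
       ∀ j : ℕ, ℓ < j → ∀ (i : Fin r) (A : Finset (Fin n)),
          IsMinGen K (I i) A → A.card + f i = j → mIdx A + f i < k + j) := by
  have hβ : ∀ k j, betti K I f k j ≠ 0 ↔ ∃ v, (∃ (i : Fin r) (A : Finset (Fin n)),
      IsMinGen K (I i) A ∧ A.card + f i = j ∧ v = mIdx A + f i) ∧ k + j ≤ v := fun k j => by
    rw [betti_ne_zero_iff K I f fun i => (hM.1 i).1]
    constructor
    · rintro ⟨i, A, hA, hj, hk⟩
      exact ⟨_, ⟨i, A, hA, hj, rfl⟩, hk⟩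
    · rintro ⟨_, ⟨i, A, hA, hj, rfl⟩, hk⟩
      exact ⟨i, A, hA, hj, hk⟩
  rw [isExtremal_iff_of_ne_zero_iff hβ]
  refine and_congr_right fun _ => forall₂_congr fun j _ => ?_
  constructor
  · exact fun h i A hA hj => h _ ⟨i, A, hA, hj, rfl⟩
  · rintro h _ ⟨i, A, hA, hj, rfl⟩
    exact h i A hA hj

/-- `β_{k,k+ℓ}(M)` is extremal iff
`k + ℓ = max{m(u) + f_i : u e_i ∈ G(M)_ℓ}` and `m(u) + f_i < k + j` for all `j > ℓ` and
all `u e_i ∈ G(M)_j`. -/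
theorem stmt_8 (K : Type*) [Field K] (n r : ℕ)
    (I : Fin r → Ideal (MvPolynomial (Fin n) K)) (f : Fin r → ℕ) (hf : Monotone f)
    (hM : IsSqStableSubmodule K I f) (k ℓ : ℕ) :
    IsExtremal (betti K I f) k ℓ ↔
      (IsGreatest {v : ℕ | ∃ (i : Fin r) (A : Finset (Fin n)),
          IsMinGen K (I i) A ∧ A.card + f i = ℓ ∧ v = mIdx A + f i} (k + ℓ) ∧
       ∀ j : ℕ, ℓ < j → ∀ (i : Fin r) (A : Finset (Fin n)),
          IsMinGen K (I i) A → A.card + f i = j → mIdx A + f i < k + j) :=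
  stmt_8_general K n r I f hM k ℓ
end

section
/- Let M = ⊕_{i=1}^r I_i e_i ⊊ S^r be a squarefree stable submodule (all f_i = 0) generated in degrees d_1 < d_2 < ... < d_t, and set m_{d_j} = max{m(u) : u e_i ∈ G(M)_{d_j}}. If m_{d_1} - d_1 > m_{d_2} - d_2 > ... > m_{d_t} - d_t, then for each i = 1,...,t, β_{m_{d_i} - d_i, m_{d_i}}(M) is an extremal Betti number of M, so M has at least t extremal Betti numbers. -/
open scoped Classical

/-!
In the Aramova–Herzog–Hibi formula a minimal generator `u` of degree `d_j` contributes
`C(m(u) - d_j, k)` to `β_{k,k+d_j}` and nothing elsewhere, and `m(u) - d_j ≤ m_{d_j} - d_j`.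
Since `m_{d_j} - d_j` strictly decreases in `j`, no generator contributes to a position
`(k, ℓ) ≥ (m_{d_j} - d_j, d_j)` other than that corner, while a generator attaining `m_{d_j}`
contributes `C(m_{d_j} - d_j, m_{d_j} - d_j) = 1` at the corner.
-/

section Betti

variable {K : Type*} [Field K] {n r : ℕ}

theorem mem_mgens_iff {I : Ideal (MvPolynomial (Fin n) K)} {d : ℕ} {A : Finset (Fin n)} :
    A ∈ mgens K I d ↔ IsMinGen K I A ∧ A.card = d := by
  simp [mgens]

theorem choose_le_betti {I : Fin r → Ideal (MvPolynomial (Fin n) K)} {f : Fin r → ℕ}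
    {k j : ℕ} {i : Fin r} {A : Finset (Fin n)} (hA : A ∈ mgens K (I i) (j - f i)) :
    (mIdx A - A.card).choose k ≤ betti K I f k j :=
  calc (mIdx A - A.card).choose k
      ≤ ∑ B ∈ mgens K (I i) (j - f i), (mIdx B - B.card).choose k :=
        Finset.single_le_sum (f := fun B => (mIdx B - B.card).choose k)
          (fun _ _ => Nat.zero_le _) hA
    _ ≤ betti K I f k j :=
        Finset.single_le_sum (f := fun p => ∑ B ∈ mgens K (I p) (j - f p),
          (mIdx B - B.card).choose k) (fun _ _ => Nat.zero_le _) (Finset.mem_univ i)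

theorem betti_ne_zero_of_mem_mgens {I : Fin r → Ideal (MvPolynomial (Fin n) K)}
    {f : Fin r → ℕ} {j : ℕ} {i : Fin r} {A : Finset (Fin n)}
    (hA : A ∈ mgens K (I i) (j - f i)) :
    betti K I f (mIdx A - A.card) j ≠ 0 :=
  Nat.pos_iff_ne_zero.mp <| (Nat.choose_self _).symm.trans_le (choose_le_betti hA)

theorem betti_eq_zero_of_forall_lt {I : Fin r → Ideal (MvPolynomial (Fin n) K)}
    {f : Fin r → ℕ} {k j : ℕ}
    (h : ∀ i, ∀ A ∈ mgens K (I i) (j - f i), mIdx A - A.card < k) :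
    betti K I f k j = 0 :=
  Finset.sum_eq_zero fun i _ => Finset.sum_eq_zero fun A hA =>
    Nat.choose_eq_zero_of_lt (h i A hA)

end Betti

theorem stmt_13_general (K : Type*) [Field K] (n r t : ℕ)
    (I : Fin r → Ideal (MvPolynomial (Fin n) K))
    (d : Fin t → ℕ) (hd : StrictMono d)
    (hgen : ∀ (i : Fin r) (A : Finset (Fin n)), IsMinGen K (I i) A → ∃ j, A.card = d j)
    (m : Fin t → ℕ)
    (hm : ∀ j : Fin t, IsGreatest {v : ℕ | ∃ (i : Fin r) (A : Finset (Fin n)),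
      IsMinGen K (I i) A ∧ A.card = d j ∧ v = mIdx A} (m j))
    (hdec : ∀ j j' : Fin t, j < j' → m j' - d j' < m j - d j) :
    ∀ j : Fin t, IsExtremal (betti K I (fun _ => 0)) (m j - d j) (d j) := by
  intro j
  obtain ⟨⟨i₀, A₀, hA₀, hcard₀, hmA₀⟩, -⟩ := hm j
  refine ⟨?_, fun k ℓ hk hℓ hne => betti_eq_zero_of_forall_lt fun i A hA => ?_⟩
  · rw [hmA₀, ← hcard₀]
    exact betti_ne_zero_of_mem_mgens (mem_mgens_iff.mpr ⟨hA₀, by simp [hcard₀]⟩)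
  obtain ⟨hA, hcard⟩ := mem_mgens_iff.mp hA
  rw [Nat.sub_zero] at hcard
  obtain ⟨j', hj'⟩ := hgen i A hA
  have hgap : mIdx A - A.card ≤ m j' - d j' :=
    hj' ▸ Nat.sub_le_sub_right ((hm j').2 ⟨i, A, hA, hj', rfl⟩) _
  rcases (hd.le_iff_le.mp (hj' ▸ hcard ▸ hℓ : d j ≤ d j')).eq_or_lt with rfl | hjj'
  · have hℓ_eq : ℓ = d j := hcard ▸ hj'
    exact hgap.trans_lt (hk.lt_of_ne fun h => hne (by rw [h, hℓ_eq]))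
  · exact hgap.trans_lt ((hdec j j' hjj').trans_le hk)

/-- for `M ⊊ S^r` squarefree stable generated in degrees `d_1 < ⋯ < d_t`,
with `m_{d_j} = max{m(u) : u e_i ∈ G(M)_{d_j}}`, if
`m_{d_1}-d_1 > ⋯ > m_{d_t}-d_t`, then each `β_{m_{d_j}-d_j, m_{d_j}}(M)` is extremal. -/
theorem stmt_13 (K : Type*) [Field K] (n r t : ℕ)
    (I : Fin r → Ideal (MvPolynomial (Fin n) K))
    (hM : IsSqStableSubmodule K I (fun _ => 0))
    (d : Fin t → ℕ) (hd : StrictMono d)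
    (hgen : ∀ (i : Fin r) (A : Finset (Fin n)), IsMinGen K (I i) A → ∃ j, A.card = d j)
    (m : Fin t → ℕ)
    (hm : ∀ j : Fin t, IsGreatest {v : ℕ | ∃ (i : Fin r) (A : Finset (Fin n)),
      IsMinGen K (I i) A ∧ A.card = d j ∧ v = mIdx A} (m j))
    (hdec : ∀ j j' : Fin t, j < j' → m j' - d j' < m j - d j) :
    ∀ j : Fin t, IsExtremal (betti K I (fun _ => 0)) (m j - d j) (d j) :=
  stmt_13_general K n r t I d hd hgen m hm hdec
end

section
/- Given integers n ≥ 3, 1 ≤ t ≤ n-1, r ≥ t, and t pairs (k_1,ℓ_1),...,(k_t,ℓ_t) with 0 ≤ k_t < ... < k_1 ≤ n-1, 1 ≤ ℓ_1 < ... < ℓ_t ≤ n, and k_i + ℓ_i = n for all i, there exists a squarefree lexicographic submodule L ⊊ S^r generated in degrees ℓ_1,...,ℓ_t whose super extremal Betti numbers are exactly β_{k_1,n}(L),...,β_{k_t,n}(L) (i.e., β_{k,n}(L) ≠ 0 iff k ∈ {k_1,...,k_t}). -/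
open scoped Classical

/-!
Every component is a squarefree Veronese ideal `[x_1,…,x_n]^d`: component `j` has degree
`ℓ_{min(j,t)}`. Its minimal generators are exactly the squarefree monomials of degree `d`,
so it is a lexsegment ideal, the degrees increase along the components, and among the
generators of degree `d` there is one divisible by `x_n`. Hence `β_{κ,n}` is nonzero exactly
when `n - κ` is one of the `ℓ_i`, i.e. when `κ` is one of the `k_i`.
-/

open MvPolynomial

section SquarefreePowers

variable {K : Type*} [Field K] {n : ℕ}

lemma sqMon_eq_monomial (A : Finset (Fin n)) :
    sqMon K A = monomial (∑ i ∈ A, Finsupp.single i 1) 1 := by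
  rw [monomial_sum_one]
  rfl

lemma sum_single_one_le_iff {σ : Type*} {A B : Finset σ} :
    ∑ i ∈ B, Finsupp.single i 1 ≤ ∑ i ∈ A, Finsupp.single i (1 : ℕ) ↔ B ⊆ A := by
  classical
  rw [← Finsupp.orderIsoMultiset.le_iff_le, Finsupp.coe_orderIsoMultiset,
    Finsupp.toMultiset_sum_single, Finsupp.toMultiset_sum_single, one_nsmul, one_nsmul,
    Finset.val_le_iff]

lemma sqMon_mem_sqPow_iff {d : ℕ} {A : Finset (Fin n)} :
    sqMon K A ∈ sqPow K n d ↔ d ≤ A.card := by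
  have hspan : sqPow K n d = Ideal.span ((fun e => monomial e (1 : K)) ''
      ((fun B : Finset (Fin n) => ∑ i ∈ B, Finsupp.single i 1) '' {B | B.card = d})) := by
    rw [Set.image_image, sqPow]
    congr 1
    ext p
    simp [sqMon_eq_monomial, eq_comm]
  rw [hspan, mem_ideal_span_monomial_image, sqMon_eq_monomial, support_monomial,
    if_neg one_ne_zero]
  simp only [Finset.mem_singleton, forall_eq, Set.exists_mem_image, Set.mem_ofPred_eq,
    sum_single_one_le_iff]
  constructor
  · rintro ⟨B, rfl, hBA⟩
    exact Finset.card_le_card hBA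
  · intro h
    obtain ⟨B, hBA, hB⟩ := Finset.exists_subset_card_eq h
    exact ⟨B, hB, hBA⟩

lemma isMinGen_sqPow_iff {d : ℕ} {A : Finset (Fin n)} :
    IsMinGen K (sqPow K n d) A ↔ A.card = d := by
  simp only [IsMinGen, sqMon_mem_sqPow_iff, not_le]
  constructor
  · rintro ⟨hdA, hmin⟩
    obtain ⟨B, hBA, hB⟩ := Finset.exists_subset_card_eq hdA
    refine le_antisymm ?_ hdA
    by_contra! hlt
    have := hmin B (Finset.ssubset_iff_subset_ne.mpr ⟨hBA, by rintro rfl; omega⟩)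
    omega
  · rintro rfl
    exact ⟨le_rfl, fun B hB => Finset.card_lt_card hB⟩

lemma sqPow_ne_top {d : ℕ} (hd : 0 < d) : sqPow K n d ≠ ⊤ := by
  intro htop
  have : sqMon K (∅ : Finset (Fin n)) ∈ sqPow K n d := htop ▸ Submodule.mem_top
  rw [sqMon_mem_sqPow_iff, Finset.card_empty] at this
  omega

lemma isSqLexIdeal_sqPow (d : ℕ) : IsSqLexIdeal K (sqPow K n d) := by
  refine ⟨⟨{A | A.card = d}, ?_⟩, fun A B hAB hA _ => ?_⟩
  · rw [sqPow]
    congr 1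
    ext p
    simp [eq_comm]
  · rw [sqMon_mem_sqPow_iff] at hA ⊢
    omega

lemma indeg_sqPow {d : ℕ} (hd : d ≤ n) : indeg K (sqPow K n d) = d := by
  simp only [indeg, sqMon_mem_sqPow_iff]
  obtain ⟨A, -, hA⟩ := Finset.exists_subset_card_eq
    (show d ≤ (Finset.univ : Finset (Fin n)).card by simpa using hd)
  refine le_antisymm (Nat.sInf_le ⟨A, hA, hA.ge⟩) (le_csInf ⟨d, A, hA, hA.ge⟩ ?_)
  rintro _ ⟨B, rfl, hB⟩
  exact hB

lemma sqPow_antitone : Antitone (sqPow K n) := by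
  intro d d' h
  rw [sqPow, Ideal.span_le]
  rintro _ ⟨A, rfl, rfl⟩
  exact sqMon_mem_sqPow_iff.mpr h

end SquarefreePowers

section SquarefreePowerModules

variable {K : Type*} [Field K] {n r : ℕ}

lemma isSqLexSubmodule_sqPow {d : Fin r → ℕ} (hd : Monotone d) (hd0 : ∀ j, 0 < d j)
    (hdn : ∀ j, d j ≤ n) : IsSqLexSubmodule K (fun j => sqPow K n (d j)) (fun _ => 0) := by
  refine ⟨fun j => ⟨isSqLexIdeal_sqPow _, sqPow_ne_top (hd0 j)⟩, fun j _ => ?_⟩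
  rw [indeg_sqPow (hdn _), add_zero, Nat.sub_zero]
  exact sqPow_antitone (hd (Fin.mk_le_mk.mpr (Nat.le_succ _)))

lemma mIdx_le (A : Finset (Fin n)) : mIdx A ≤ n :=
  Finset.sup_le fun i _ => i.2

lemma exists_card_eq_mIdx_eq {d : ℕ} (hd0 : 0 < d) (hdn : d ≤ n) :
    ∃ A : Finset (Fin n), A.card = d ∧ mIdx A = n := by
  let last : Fin n := ⟨n - 1, by omega⟩
  obtain ⟨B, hB, hBcard⟩ := Finset.exists_subset_card_eq
    (show d - 1 ≤ (Finset.univ.erase last).card by simp; omega)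
  have hlast : last ∉ B := fun h => (Finset.mem_erase.mp (hB h)).1 rfl
  refine ⟨insert last B, by rw [Finset.card_insert_of_notMem hlast]; omega,
    le_antisymm (mIdx_le _) ?_⟩
  calc n = last.1 + 1 := by simp [last]; omega
    _ ≤ mIdx (insert last B) := Finset.le_sup (f := fun i : Fin n => i.1 + 1) (by simp)

lemma ncard_superExtremal_sqPow_ne_zero_iff {d : Fin r → ℕ} (hd0 : ∀ j, 0 < d j)
    (hdn : ∀ j, d j ≤ n) (κ : ℕ) :
    Set.ncard {p : Fin r × Finset (Fin n) |
      IsMinGen K (sqPow K n (d p.1)) p.2 ∧ p.2.card + κ = n ∧ mIdx p.2 = n} ≠ 0 ↔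
      ∃ j, d j + κ = n := by
  simp only [isMinGen_sqPow_iff]
  constructor
  · intro h
    obtain ⟨⟨j, A⟩, hA, hκ, -⟩ := Set.nonempty_of_ncard_ne_zero h
    exact ⟨j, hA ▸ hκ⟩
  · rintro ⟨j, hκ⟩
    obtain ⟨A, hA, hmA⟩ := exists_card_eq_mIdx_eq (hd0 j) (hdn j)
    exact Set.ncard_ne_zero_of_mem (a := (j, A)) ⟨hA, hA ▸ hκ, hmA⟩

end SquarefreePowerModules

theorem stmt_16_general (K : Type*) [Field K] (n t r : ℕ)
    (ht1 : 1 ≤ t) (hr : t ≤ r)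
    (k ℓ : Fin t → ℕ) (hℓ : StrictMono ℓ)
    (hℓ1 : ∀ i, 1 ≤ ℓ i) (hℓn : ∀ i, ℓ i ≤ n)
    (hsum : ∀ i, k i + ℓ i = n) :
    ∃ I : Fin r → Ideal (MvPolynomial (Fin n) K),
      IsSqLexSubmodule K I (fun _ => 0) ∧
      (∀ (j : Fin r) (A : Finset (Fin n)), IsMinGen K (I j) A → ∃ i, A.card = ℓ i) ∧
      (∀ i : Fin t, ∃ (j : Fin r) (A : Finset (Fin n)),
        IsMinGen K (I j) A ∧ A.card = ℓ i) ∧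
      ∀ κ : ℕ,
        (Set.ncard {p : Fin r × Finset (Fin n) |
          IsMinGen K (I p.1) p.2 ∧ p.2.card + κ = n ∧ mIdx p.2 = n} ≠ 0 ↔
          ∃ i, k i = κ) := by
  let clamp : Fin r → Fin t := fun j => ⟨min j (t - 1), by omega⟩
  have hclamp : Monotone clamp := fun j j' h => Fin.mk_le_mk.mpr (min_le_min_right _ h)
  have hclamp_val (i : Fin t) : clamp ⟨i, i.2.trans_le hr⟩ = i := Fin.ext (by simp [clamp]; omega)
  refine ⟨fun j => sqPow K n (ℓ (clamp j)),
    isSqLexSubmodule_sqPow (hℓ.monotone.comp hclamp) (fun _ => hℓ1 _) (fun _ => hℓn _),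
    fun j A hA => ⟨clamp j, isMinGen_sqPow_iff.mp hA⟩, fun i => ?_, fun κ => ?_⟩
  · obtain ⟨A, hA, -⟩ := exists_card_eq_mIdx_eq (hℓ1 i) (hℓn i)
    refine ⟨⟨i, i.2.trans_le hr⟩, A, ?_, hA⟩
    dsimp only
    rw [hclamp_val]
    exact isMinGen_sqPow_iff.mpr hA
  · rw [ncard_superExtremal_sqPow_ne_zero_iff (fun _ => hℓ1 _) (fun _ => hℓn _)]
    constructor
    · rintro ⟨j, hj⟩
      exact ⟨clamp j, by have := hsum (clamp j); omega⟩
    · rintro ⟨i, rfl⟩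
      exact ⟨_, by rw [hclamp_val, add_comm, hsum]⟩

/-- given `n ≥ 3`, `1 ≤ t ≤ n-1`, `r ≥ t` and pairs `(k_i, ℓ_i)` with
`k_1 > ⋯ > k_t`, `ℓ_1 < ⋯ < ℓ_t`, `k_i + ℓ_i = n`, there is a squarefree lexicographic
submodule `L ⊊ S^r` generated in degrees `ℓ_1,…,ℓ_t` whose super extremal Betti numbers
are exactly `β_{k_1,n}(L),…,β_{k_t,n}(L)`. -/
theorem stmt_16 (K : Type*) [Field K] (n t r : ℕ) (hn : 3 ≤ n)
    (ht1 : 1 ≤ t) (htn : t ≤ n - 1) (hr : t ≤ r)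
    (k ℓ : Fin t → ℕ) (hk : StrictAnti k) (hℓ : StrictMono ℓ)
    (hkn : ∀ i, k i ≤ n - 1) (hℓ1 : ∀ i, 1 ≤ ℓ i) (hℓn : ∀ i, ℓ i ≤ n)
    (hsum : ∀ i, k i + ℓ i = n) :
    ∃ I : Fin r → Ideal (MvPolynomial (Fin n) K),
      IsSqLexSubmodule K I (fun _ => 0) ∧
      (∀ (j : Fin r) (A : Finset (Fin n)), IsMinGen K (I j) A → ∃ i, A.card = ℓ i) ∧
      (∀ i : Fin t, ∃ (j : Fin r) (A : Finset (Fin n)),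
        IsMinGen K (I j) A ∧ A.card = ℓ i) ∧
      ∀ κ : ℕ,
        (Set.ncard {p : Fin r × Finset (Fin n) |
          IsMinGen K (I p.1) p.2 ∧ p.2.card + κ = n ∧ mIdx p.2 = n} ≠ 0 ↔
          ∃ i, k i = κ) :=
  stmt_16_general K n t r ht1 hr k ℓ hℓ hℓ1 hℓn hsum
end
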